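/- arXiv:1411.3749 — 3 statements merged into one kernel-verified Lean document; each statement's English description precedes it below -/
import Mathlib

section
/- Let e_t ~ Binomial(n, p) and e_s ~ Binomial(m, q) be independent. Then the bias-corrected mass shift estimator (e_t/n - e_s/m)^2 - (e_t/n)(1 - e_t/n)/(n-1) - (e_s/m)(1 - e_s/m)/(m-1) is, for n, m ≥ 2, an unbiased estimator of (p - q)^2. -/
noncomputable def W (n : ℕ) (p : ℝ) (k : ℕ) : ℝ :=
  (n.choose k : ℝ) * p ^ k * (1 - p) ^ (n - k)

lemma W_eval (n k : ℕ) (p : ℝ) :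
    Polynomial.eval p (bernsteinPolynomial ℝ n k) = W n p k := by
  simp [bernsteinPolynomial, W]

lemma sumW0 (n : ℕ) (p : ℝ) : ∑ k ∈ Finset.range (n + 1), W n p k = 1 := by
  have := congrArg (Polynomial.eval p) (bernsteinPolynomial.sum ℝ n)
  simpa [Polynomial.eval_finset_sum, W_eval] using this

lemma sumW1 (n : ℕ) (p : ℝ) :
    ∑ k ∈ Finset.range (n + 1), (k : ℝ) * W n p k = n * p := by
  have := congrArg (Polynomial.eval p) (bernsteinPolynomial.sum_smul ℝ n)
  simpa [Polynomial.eval_finset_sum, W_eval, mul_comm] using this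

lemma sumW2 (n : ℕ) (p : ℝ) :
    ∑ k ∈ Finset.range (n + 1), (k : ℝ) * ((k : ℝ) - 1) * W n p k
      = (n : ℝ) * ((n : ℝ) - 1) * p ^ 2 := by
  have := congrArg (Polynomial.eval p) (bernsteinPolynomial.sum_mul_smul ℝ n)
  rw [Polynomial.eval_finset_sum] at this
  simp only [Polynomial.eval_smul, nsmul_eq_mul, W_eval, Polynomial.eval_pow,
    Polynomial.eval_X, Polynomial.eval_mul, Polynomial.eval_natCast] at this
  calc ∑ k ∈ Finset.range (n + 1), (k : ℝ) * ((k : ℝ) - 1) * W n p k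
      = ∑ k ∈ Finset.range (n + 1), ((k * (k - 1) : ℕ) : ℝ) * W n p k := by
        apply Finset.sum_congr rfl
        intro k _
        rcases k with _ | k
        · simp
        · push_cast; ring_nf
    _ = ((n * (n - 1) : ℕ) : ℝ) * p ^ 2 := this
    _ = (n : ℝ) * ((n : ℝ) - 1) * p ^ 2 := by
        rcases n with _ | n
        · simp
        · push_cast; ring_nf

lemma sumWmean (n : ℕ) (hn : (n : ℝ) ≠ 0) (p : ℝ) :
    ∑ k ∈ Finset.range (n + 1), W n p k * ((k : ℝ) / n) = p := by
  have h := sumW1 n p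
  calc ∑ k ∈ Finset.range (n + 1), W n p k * ((k : ℝ) / n)
      = (∑ k ∈ Finset.range (n + 1), (k : ℝ) * W n p k) / n := by
        rw [Finset.sum_div]; apply Finset.sum_congr rfl; intro k _; ring
    _ = p := by rw [h]; field_simp

lemma sumWvar (n : ℕ) (hn : (n : ℝ) ≠ 0) (hn1 : (n : ℝ) - 1 ≠ 0) (p : ℝ) :
    ∑ k ∈ Finset.range (n + 1),
      W n p k * ((k : ℝ) * ((k : ℝ) - 1) / ((n : ℝ) * ((n : ℝ) - 1))) = p ^ 2 := by
  have h := sumW2 n p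
  calc ∑ k ∈ Finset.range (n + 1),
        W n p k * ((k : ℝ) * ((k : ℝ) - 1) / ((n : ℝ) * ((n : ℝ) - 1)))
      = (∑ k ∈ Finset.range (n + 1), (k : ℝ) * ((k : ℝ) - 1) * W n p k)
          / ((n : ℝ) * ((n : ℝ) - 1)) := by
        rw [Finset.sum_div]; apply Finset.sum_congr rfl; intro k _; ring
    _ = p ^ 2 := by rw [h]; field_simp

/-- Expectation of `f e_t e_s` for independent `e_t ~ Binomial(n, p)`, `e_s ~ Binomial(m, q)`. -/
noncomputable def binExp2 (n : ℕ) (p : ℝ) (m : ℕ) (q : ℝ) (f : ℕ → ℕ → ℝ) : ℝ :=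
  ∑ k ∈ Finset.range (n + 1), ∑ l ∈ Finset.range (m + 1),
    ((n.choose k : ℝ) * p ^ k * (1 - p) ^ (n - k)) *
      ((m.choose l : ℝ) * q ^ l * (1 - q) ^ (m - l)) * f k l

/-- The bias-corrected mass shift estimator
`(e_t/n - e_s/m)² - (e_t/n)(1 - e_t/n)/(n-1) - (e_s/m)(1 - e_s/m)/(m-1)`
is, for `n, m ≥ 2`, an unbiased estimator of `(p - q)²`. -/
theorem bias_corrected_mass_shift_unbiased (n m : ℕ) (hn : 2 ≤ n) (hm : 2 ≤ m)
    (p q : ℝ) (hp0 : 0 ≤ p) (hp1 : p ≤ 1) (hq0 : 0 ≤ q) (hq1 : q ≤ 1) :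
    binExp2 n p m q (fun k l =>
        ((k : ℝ) / n - (l : ℝ) / m) ^ 2
          - ((k : ℝ) / n) * (1 - (k : ℝ) / n) / ((n : ℝ) - 1)
          - ((l : ℝ) / m) * (1 - (l : ℝ) / m) / ((m : ℝ) - 1))
      = (p - q) ^ 2 := by
  have h2n : (2 : ℝ) ≤ (n : ℝ) := by exact_mod_cast hn
  have h2m : (2 : ℝ) ≤ (m : ℝ) := by exact_mod_cast hm
  have hn0 : (n : ℝ) ≠ 0 := by linarith
  have hm0 : (m : ℝ) ≠ 0 := by linarith
  have hn1 : (n : ℝ) - 1 ≠ 0 := by intro h; linarith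
  have hm1 : (m : ℝ) - 1 ≠ 0 := by intro h; linarith
  show (∑ k ∈ Finset.range (n + 1), ∑ l ∈ Finset.range (m + 1),
      W n p k * W m q l *
        (((k : ℝ) / n - (l : ℝ) / m) ^ 2
          - ((k : ℝ) / n) * (1 - (k : ℝ) / n) / ((n : ℝ) - 1)
          - ((l : ℝ) / m) * (1 - (l : ℝ) / m) / ((m : ℝ) - 1))) = (p - q) ^ 2
  have inner : ∀ k : ℕ,
      (∑ l ∈ Finset.range (m + 1),
        W n p k * W m q l *
          (((k : ℝ) / n - (l : ℝ) / m) ^ 2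
            - ((k : ℝ) / n) * (1 - (k : ℝ) / n) / ((n : ℝ) - 1)
            - ((l : ℝ) / m) * (1 - (l : ℝ) / m) / ((m : ℝ) - 1)))
      = W n p k * ((k : ℝ) * ((k : ℝ) - 1) / ((n : ℝ) * ((n : ℝ) - 1)))
          + W n p k * q ^ 2 - W n p k * ((k : ℝ) / n) * (2 * q) := by
    intro k
    have key : ∀ l : ℕ,
        W n p k * W m q l *
          (((k : ℝ) / n - (l : ℝ) / m) ^ 2
            - ((k : ℝ) / n) * (1 - (k : ℝ) / n) / ((n : ℝ) - 1)
            - ((l : ℝ) / m) * (1 - (l : ℝ) / m) / ((m : ℝ) - 1))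
        = (W n p k * ((k : ℝ) * ((k : ℝ) - 1) / ((n : ℝ) * ((n : ℝ) - 1)))) * W m q l
            + W n p k * (W m q l * ((l : ℝ) * ((l : ℝ) - 1) / ((m : ℝ) * ((m : ℝ) - 1))))
            - (W n p k * ((k : ℝ) / n) * 2) * (W m q l * ((l : ℝ) / m)) := by
      intro l
      field_simp
      ring
    rw [Finset.sum_congr rfl fun l _ => key l]
    rw [Finset.sum_sub_distrib, Finset.sum_add_distrib, ← Finset.mul_sum, ← Finset.mul_sum,
      ← Finset.mul_sum, sumW0 m q, sumWvar m hm0 hm1 q, sumWmean m hm0 q]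
    ring
  rw [Finset.sum_congr rfl fun k _ => inner k]
  rw [Finset.sum_sub_distrib, Finset.sum_add_distrib, ← Finset.sum_mul, ← Finset.sum_mul,
    sumW0 n p, sumWvar n hn0 hn1 p, sumWmean n hn0 p]
  ring
end

section
/- Let (e_ij) be multinomial with n ≥ 3 trials and cell probabilities (p_ij). Define the estimator T̂ = Σ_{i<j<k} e_ij e_ik e_jk / (n(n-1)(n-2)). Then T̂ is an unbiased estimator of the triangle probability T = Σ_{i<j<k} p_ij p_ik p_jk. -/
open Finset

/-- Expectation of `f` applied to the vector of cell counts of a multinomial with `n`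
trials and cell probabilities `p` (trials are i.i.d. draws of a cell). -/
noncomputable def mExp {ι : Type*} [Fintype ι] [DecidableEq ι]
    (n : ℕ) (p : ι → ℝ) (f : (ι → ℕ) → ℝ) : ℝ :=
  ∑ ω : Fin n → ι, (∏ t, p (ω t)) *
    f (fun c => (Finset.univ.filter fun t => ω t = c).card)

/-- The set of ordered representatives `(i, j, k)` with `i < j < k` of unordered
triples of distinct nodes. -/
def triples (V : Type*) [Fintype V] [LinearOrder V] : Finset (V × V × V) :=
  Finset.univ.filter fun x => x.1 < x.2.1 ∧ x.2.1 < x.2.2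

lemma sum_pi_prod {ι : Type*} [Fintype ι] [DecidableEq ι] (n : ℕ) (F : Fin n → ι → ℝ) :
    ∑ ω : Fin n → ι, ∏ t, F t (ω t) = ∏ t, ∑ i, F t i := by
  rw [Finset.prod_univ_sum, ← Fintype.piFinset_univ]

lemma prod_three {α β : Type*} [Fintype α] [DecidableEq α] [CommMonoid β]
    (t s u : α) (hts : t ≠ s) (htu : t ≠ u) (hsu : s ≠ u)
    (f : α → β) (h1 : ∀ x, x ≠ t → x ≠ s → x ≠ u → f x = 1) :
    ∏ x, f x = f t * f s * f u := by
  have hsub : ({t, s, u} : Finset α) ⊆ univ := subset_univ _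
  rw [← Finset.prod_subset hsub (by intro x _ hx; simp at hx; push_neg at hx; exact h1 x hx.1 hx.2.1 hx.2.2)]
  rw [Finset.prod_insert (by simp [hts, htu]), Finset.prod_insert (by simp [hsu]),
    Finset.prod_singleton, mul_assoc]

lemma triple_expand {α : Type*} [Fintype α] (P : ℝ) (A B C : α → ℝ) :
    P * ((∑ t, A t) * (∑ s, B s) * (∑ u, C u))
      = ∑ t, ∑ s, ∑ u, P * (A t * B s * C u) := by
  rw [Finset.sum_mul_sum, Finset.sum_mul, Finset.mul_sum]
  refine Finset.sum_congr rfl fun t _ => ?_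
  rw [Finset.sum_mul, Finset.mul_sum]
  refine Finset.sum_congr rfl fun s _ => ?_
  rw [Finset.mul_sum, Finset.mul_sum]

lemma key {ι : Type*} [Fintype ι] [DecidableEq ι] (n : ℕ) (hn : 3 ≤ n) (p : ι → ℝ)
    (hp1 : ∑ c, p c = 1) (a b c : ι) (hab : a ≠ b) (hac : a ≠ c) (hbc : b ≠ c) :
    mExp n p (fun e => (e a : ℝ) * (e b : ℝ) * (e c : ℝ))
      = (n : ℝ) * ((n : ℝ) - 1) * ((n : ℝ) - 2) * (p a * p b * p c) := by
  have hcard : ∀ (ω : Fin n → ι) (x : ι),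
      (((univ.filter fun t => ω t = x).card : ℕ) : ℝ)
        = ∑ t : Fin n, (if ω t = x then (1:ℝ) else 0) := by
    intro ω x
    rw [Finset.card_filter]
    push_cast
    simp [apply_ite]
  set χ : Fin n → Fin n → Fin n → Fin n → ι → ℝ := fun t s u t' i =>
    (if t' = t then (if i = a then 1 else 0)
     else if t' = s then (if i = b then 1 else 0)
     else if t' = u then (if i = c then 1 else 0) else 1) with hχ
  have G_eq : ∀ t s u : Fin n,
      (∑ ω : Fin n → ι, (∏ t', p (ω t')) *
        ((if ω t = a then (1:ℝ) else 0) * (if ω s = b then (1:ℝ) else 0) *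
          (if ω u = c then (1:ℝ) else 0)))
      = if t ≠ s ∧ t ≠ u ∧ s ≠ u then p a * p b * p c else 0 := by
    intro t s u
    split_ifs with hd
    · obtain ⟨hts, htu, hsu⟩ := hd
      have step1 : ∀ ω : Fin n → ι,
          (∏ t', p (ω t')) *
            ((if ω t = a then (1:ℝ) else 0) * (if ω s = b then (1:ℝ) else 0) *
              (if ω u = c then (1:ℝ) else 0))
          = ∏ t', (fun t' i => p i * χ t s u t' i) t' (ω t') := by
        intro ω
        simp only
        rw [Finset.prod_mul_distrib]
        congr 1
        rw [prod_three t s u hts htu hsu _ (by intro x hxt hxs hxu; simp [hχ, hxt, hxs, hxu])]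
        simp [hχ, hts.symm, htu.symm, hsu.symm, Ne.symm hts, Ne.symm htu, Ne.symm hsu]
      rw [Finset.sum_congr rfl (fun ω _ => step1 ω), sum_pi_prod n (fun t' i => p i * χ t s u t' i)]
      have factor : ∀ t' : Fin n, (∑ i, p i * χ t s u t' i) =
          if t' = t then p a else if t' = s then p b else if t' = u then p c else 1 := by
        intro t'
        simp only [hχ]
        split_ifs with h1 h2 h3 <;> simp [mul_ite, mul_one, mul_zero, hp1]
      rw [Finset.prod_congr rfl (fun t' _ => factor t')]
      rw [prod_three t s u hts htu hsu _ (by intro x hxt hxs hxu; simp [hxt, hxs, hxu])]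
      simp [hts.symm, Ne.symm hts, Ne.symm htu, Ne.symm hsu]
    · push_neg at hd
      apply Finset.sum_eq_zero
      intro ω _
      have hz : ((if ω t = a then (1:ℝ) else 0) * (if ω s = b then (1:ℝ) else 0) *
          (if ω u = c then (1:ℝ) else 0)) = 0 := by
        by_cases h1 : ω t = a <;> by_cases h2 : ω s = b <;> by_cases h3 : ω u = c <;>
          simp [h1, h2, h3]
        exfalso
        by_cases hts : t = s
        · subst hts; exact hab (h1.symm.trans h2)
        by_cases htu : t = u
        · subst htu; exact hac (h1.symm.trans h3)
        have hsu := hd hts htu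
        subst hsu; exact hbc (h2.symm.trans h3)
      rw [hz, mul_zero]
  have count : (∑ t : Fin n, ∑ s : Fin n, ∑ u : Fin n,
      (if t ≠ s ∧ t ≠ u ∧ s ≠ u then p a * p b * p c else 0))
      = (n:ℝ) * ((n:ℝ)-1) * ((n:ℝ)-2) * (p a * p b * p c) := by
    have hc2 : ((n - 2 : ℕ) : ℝ) = (n:ℝ) - 2 := by
      rw [Nat.cast_sub (by omega)]; norm_num
    have hc1 : ((n - 1 : ℕ) : ℝ) = (n:ℝ) - 1 := by
      rw [Nat.cast_sub (by omega)]; norm_num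
    have h2 : ∀ t s : Fin n, t ≠ s →
        (∑ u : Fin n, (if t ≠ s ∧ t ≠ u ∧ s ≠ u then p a * p b * p c else 0))
        = ((n:ℝ)-2) * (p a * p b * p c) := by
      intro t s hts
      rw [← Finset.sum_filter]
      have hfil : (univ.filter fun u : Fin n => t ≠ s ∧ t ≠ u ∧ s ≠ u)
          = (univ.erase t).erase s := by
        ext u
        simp only [Finset.mem_filter, Finset.mem_erase, Finset.mem_univ, and_true, true_and]
        constructor
        · rintro ⟨-, h1, h2⟩; exact ⟨Ne.symm h2, Ne.symm h1⟩
        · rintro ⟨h1, h2⟩; exact ⟨hts, Ne.symm h2, Ne.symm h1⟩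
      rw [hfil, Finset.sum_const, Finset.card_erase_of_mem (by simp [Ne.symm hts]),
        Finset.card_erase_of_mem (Finset.mem_univ t), Finset.card_univ, Fintype.card_fin]
      have : n - 1 - 1 = n - 2 := by omega
      rw [this, nsmul_eq_mul, hc2]
    have h1 : ∀ t : Fin n,
        (∑ s : Fin n, ∑ u : Fin n, (if t ≠ s ∧ t ≠ u ∧ s ≠ u then p a * p b * p c else 0))
        = ((n:ℝ)-1) * (((n:ℝ)-2) * (p a * p b * p c)) := by
      intro t
      have : ∀ s : Fin n,
          (∑ u : Fin n, (if t ≠ s ∧ t ≠ u ∧ s ≠ u then p a * p b * p c else 0))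
          = if t ≠ s then ((n:ℝ)-2) * (p a * p b * p c) else 0 := by
        intro s
        split_ifs with h
        · exact h2 t s h
        · push_neg at h; subst h; simp
      rw [Finset.sum_congr rfl (fun s _ => this s), ← Finset.sum_filter]
      have hfil : (univ.filter fun s : Fin n => t ≠ s) = univ.erase t := by
        ext s; simp [ne_comm]
      rw [hfil, Finset.sum_const, Finset.card_erase_of_mem (Finset.mem_univ t),
        Finset.card_univ, Fintype.card_fin, nsmul_eq_mul, hc1]
    rw [Finset.sum_congr rfl (fun t _ => h1 t), Finset.sum_const, Finset.card_univ,
      Fintype.card_fin, nsmul_eq_mul]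
    ring
  rw [← count]
  unfold mExp
  have expand : ∀ ω : Fin n → ι,
      (∏ t', p (ω t')) *
        ((fun e => ((e a : ℕ) : ℝ) * ((e b : ℕ) : ℝ) * ((e c : ℕ) : ℝ))
          (fun x => (univ.filter fun t => ω t = x).card))
      = ∑ t : Fin n, ∑ s : Fin n, ∑ u : Fin n, (∏ t', p (ω t')) *
          ((if ω t = a then (1:ℝ) else 0) * (if ω s = b then (1:ℝ) else 0) *
            (if ω u = c then (1:ℝ) else 0)) := by
    intro ω
    simp only [hcard ω]
    exact triple_expand _ _ _ _
  rw [Finset.sum_congr rfl (fun ω _ => expand ω), Finset.sum_comm]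
  refine Finset.sum_congr rfl fun t _ => ?_
  rw [Finset.sum_comm]
  refine Finset.sum_congr rfl fun s _ => ?_
  rw [Finset.sum_comm]
  exact Finset.sum_congr rfl fun u _ => G_eq t s u

/-- With edges sampled multinomially (`n ≥ 3` trials over unordered node pairs with
probabilities `p`), the estimator `T̂ = Σ_{i<j<k} e_{ij} e_{ik} e_{jk} / (n(n-1)(n-2))`
is an unbiased estimator of the triangle probability `T = Σ_{i<j<k} p_{ij} p_{ik} p_{jk}`. -/
theorem triangle_probability_estimator_unbiased {V : Type*} [Fintype V] [LinearOrder V]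
    (n : ℕ) (hn : 3 ≤ n) (p : Sym2 V → ℝ)
    (hp0 : ∀ c, 0 ≤ p c) (hp1 : ∑ c, p c = 1) :
    mExp n p (fun e =>
        (∑ x ∈ triples V,
            (e s(x.1, x.2.1) : ℝ) * (e s(x.1, x.2.2) : ℝ) * (e s(x.2.1, x.2.2) : ℝ))
          / ((n : ℝ) * ((n : ℝ) - 1) * ((n : ℝ) - 2)))
      = ∑ x ∈ triples V, p s(x.1, x.2.1) * p s(x.1, x.2.2) * p s(x.2.1, x.2.2) := by
  have hn3 : (3:ℝ) ≤ (n:ℝ) := by exact_mod_cast hn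
  have hD : (n:ℝ) * ((n:ℝ)-1) * ((n:ℝ)-2) ≠ 0 := by
    have h1 : (0:ℝ) < (n:ℝ) := by linarith
    have h2 : (0:ℝ) < (n:ℝ) - 1 := by linarith
    have h3 : (0:ℝ) < (n:ℝ) - 2 := by linarith
    positivity
  unfold mExp
  simp only [mul_div_assoc']
  rw [← Finset.sum_div, div_eq_iff hD]
  have swap : (∑ ω : Fin n → Sym2 V, (∏ t, p (ω t)) *
      (∑ x ∈ triples V,
        (((univ.filter fun t => ω t = s(x.1, x.2.1)).card : ℕ) : ℝ) *
        (((univ.filter fun t => ω t = s(x.1, x.2.2)).card : ℕ) : ℝ) *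
        (((univ.filter fun t => ω t = s(x.2.1, x.2.2)).card : ℕ) : ℝ)))
      = ∑ x ∈ triples V, ∑ ω : Fin n → Sym2 V, (∏ t, p (ω t)) *
        ((((univ.filter fun t => ω t = s(x.1, x.2.1)).card : ℕ) : ℝ) *
        (((univ.filter fun t => ω t = s(x.1, x.2.2)).card : ℕ) : ℝ) *
        (((univ.filter fun t => ω t = s(x.2.1, x.2.2)).card : ℕ) : ℝ)) := by
    simp only [Finset.mul_sum]
    exact Finset.sum_comm
  rw [swap]
  have inner : ∀ x ∈ triples V,
      (∑ ω : Fin n → Sym2 V, (∏ t, p (ω t)) *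
        ((((univ.filter fun t => ω t = s(x.1, x.2.1)).card : ℕ) : ℝ) *
        (((univ.filter fun t => ω t = s(x.1, x.2.2)).card : ℕ) : ℝ) *
        (((univ.filter fun t => ω t = s(x.2.1, x.2.2)).card : ℕ) : ℝ)))
      = (n:ℝ) * ((n:ℝ)-1) * ((n:ℝ)-2) *
        (p s(x.1, x.2.1) * p s(x.1, x.2.2) * p s(x.2.1, x.2.2)) := by
    rintro ⟨i, j, k⟩ hx
    simp only [triples, Finset.mem_filter, Finset.mem_univ, true_and] at hx
    obtain ⟨hij, hjk⟩ := hx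
    have hik : i < k := hij.trans hjk
    have hne1 : s(i, j) ≠ s(i, k) := by
      rw [Ne, Sym2.eq_iff]
      rintro (⟨-, rfl⟩ | ⟨rfl, rfl⟩)
      · exact lt_irrefl _ hjk
      · exact lt_irrefl _ hij
    have hne2 : s(i, j) ≠ s(j, k) := by
      rw [Ne, Sym2.eq_iff]
      rintro (⟨rfl, -⟩ | ⟨rfl, -⟩)
      · exact lt_irrefl _ hij
      · exact lt_irrefl _ hik
    have hne3 : s(i, k) ≠ s(j, k) := by
      rw [Ne, Sym2.eq_iff]
      rintro (⟨rfl, -⟩ | ⟨-, rfl⟩)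
      · exact lt_irrefl _ hij
      · exact lt_irrefl _ hjk
    exact key n hn p hp1 _ _ _ hne1 hne2 hne3
  rw [Finset.sum_congr rfl inner, ← Finset.mul_sum, mul_comm]
end

section
/- Let D ~ Binomial(n, p) and D' ~ Binomial(m, q) be independent with p ≠ q. Then the probability that D/n = D'/m tends to 0 as min(n,m) → ∞. -/
open Filter

/-- Binomial probability weight `P(Binomial(n,p) = k)`. -/
noncomputable def binW (n : ℕ) (p : ℝ) (k : ℕ) : ℝ :=
  (n.choose k : ℝ) * p ^ k * (1 - p) ^ (n - k)

lemma binW_nonneg {n : ℕ} {p : ℝ} (hp0 : 0 ≤ p) (hp1 : p ≤ 1) (k : ℕ) :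
    0 ≤ binW n p k := by
  have h1 : (0:ℝ) ≤ 1 - p := by linarith
  unfold binW; positivity

lemma sum_binW (n : ℕ) (p : ℝ) :
    ∑ k ∈ Finset.range (n + 1), binW n p k = 1 := by
  have h := congrArg (Polynomial.eval p) (bernsteinPolynomial.sum ℝ n)
  simpa [binW, bernsteinPolynomial, Polynomial.eval_finset_sum, mul_assoc] using h

lemma var_binW (n : ℕ) (p : ℝ) :
    ∑ k ∈ Finset.range (n + 1), ((n : ℝ) * p - k) ^ 2 * binW n p k
      = n * p * (1 - p) := by
  have h := congrArg (Polynomial.eval p) (bernsteinPolynomial.variance ℝ n)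
  simp only [Polynomial.eval_finset_sum, Polynomial.eval_mul, Polynomial.eval_pow,
    Polynomial.eval_sub, Polynomial.eval_natCast, Polynomial.eval_smul, Polynomial.eval_X,
    Polynomial.eval_one, nsmul_eq_mul, bernsteinPolynomial] at h
  simpa [binW, mul_assoc] using h

lemma cheb (n : ℕ) (hn : 1 ≤ n) (p ε : ℝ) (hp0 : 0 ≤ p) (hp1 : p ≤ 1) (hε : 0 < ε) :
    ∑ k ∈ Finset.range (n + 1),
        binW n p k * (if ε ≤ |(k : ℝ) / n - p| then (1:ℝ) else 0)
      ≤ 1 / (4 * ε ^ 2 * n) := by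
  have hn' : (0:ℝ) < n := by exact_mod_cast hn
  have key : ∀ k ∈ Finset.range (n + 1),
      binW n p k * (if ε ≤ |(k : ℝ) / n - p| then (1:ℝ) else 0)
        ≤ (((n:ℝ) * p - k) ^ 2 / ((n:ℝ) ^ 2 * ε ^ 2)) * binW n p k := by
    intro k _
    have hb : 0 ≤ binW n p k := binW_nonneg hp0 hp1 k
    split_ifs with h
    · have h1 : (n:ℝ) * ε ≤ |(n:ℝ) * p - k| := by
        have : (n:ℝ) * p - k = n * (p - (k:ℝ)/n) := by field_simp [mul_comm]
        rw [this, abs_mul, abs_of_pos hn']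
        have : |p - (k:ℝ)/n| = |(k:ℝ)/n - p| := abs_sub_comm _ _
        rw [this]
        exact mul_le_mul_of_nonneg_left h (le_of_lt hn')
      have h2 : (n:ℝ) ^ 2 * ε ^ 2 ≤ ((n:ℝ) * p - k) ^ 2 := by
        have := mul_self_le_mul_self (by positivity) h1
        calc (n:ℝ)^2 * ε^2 = (n*ε) * (n*ε) := by ring
          _ ≤ |(n:ℝ)*p - k| * |(n:ℝ)*p - k| := this
          _ = ((n:ℝ)*p - k)^2 := by rw [← abs_mul, abs_mul_self]; ring
      have h3 : (1:ℝ) ≤ ((n:ℝ) * p - k) ^ 2 / ((n:ℝ) ^ 2 * ε ^ 2) :=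
        (one_le_div (by positivity)).mpr h2
      calc binW n p k * 1 = 1 * binW n p k := by ring
        _ ≤ (((n:ℝ) * p - k) ^ 2 / ((n:ℝ) ^ 2 * ε ^ 2)) * binW n p k :=
          mul_le_mul_of_nonneg_right h3 hb
    · simpa using mul_nonneg (by positivity) hb
  calc ∑ k ∈ Finset.range (n + 1),
        binW n p k * (if ε ≤ |(k : ℝ) / n - p| then (1:ℝ) else 0)
      ≤ ∑ k ∈ Finset.range (n + 1),
          (((n:ℝ) * p - k) ^ 2 / ((n:ℝ) ^ 2 * ε ^ 2)) * binW n p k :=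
        Finset.sum_le_sum key
    _ = (∑ k ∈ Finset.range (n + 1), ((n:ℝ) * p - k) ^ 2 * binW n p k)
          / ((n:ℝ) ^ 2 * ε ^ 2) := by
        rw [Finset.sum_div]; exact Finset.sum_congr rfl fun k _ => by ring
    _ = (n * p * (1 - p)) / ((n:ℝ) ^ 2 * ε ^ 2) := by rw [var_binW]
    _ ≤ 1 / (4 * ε ^ 2 * n) := by
        rw [div_le_div_iff₀ (by positivity) (by positivity)]
        nlinarith [sq_nonneg (p - 1/2), sq_nonneg ((n:ℝ) * ε), sq_nonneg ε,
          mul_pos hn' hn', mul_pos (mul_pos hn' hn') (mul_pos hε hε)]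

/-- For independent `D ~ Binomial(n, p)` and `D' ~ Binomial(m, q)` with `p ≠ q`,
`P(D/n = D'/m) → 0` as `min(n,m) → ∞`. -/
theorem prob_equal_proportions_tendsto_zero
    (p q : ℝ) (hp0 : 0 ≤ p) (hp1 : p ≤ 1) (hq0 : 0 ≤ q) (hq1 : q ≤ 1) (hpq : p ≠ q) :
    Tendsto (fun nm : ℕ × ℕ =>
        ∑ k ∈ Finset.range (nm.1 + 1), ∑ l ∈ Finset.range (nm.2 + 1),
          binW nm.1 p k * binW nm.2 q l *
            (if (k : ℝ) / nm.1 = (l : ℝ) / nm.2 then (1 : ℝ) else 0))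
      atTop (nhds 0) := by
  set ε : ℝ := |p - q| / 2 with hεdef
  have hε : 0 < ε := by
    have : 0 < |p - q| := abs_pos.mpr (sub_ne_zero.mpr hpq)
    positivity
  have hfst : Tendsto (Prod.fst : ℕ × ℕ → ℕ) atTop atTop := by
    rw [← Filter.prod_atTop_atTop_eq]; exact tendsto_fst
  have hsnd : Tendsto (Prod.snd : ℕ × ℕ → ℕ) atTop atTop := by
    rw [← Filter.prod_atTop_atTop_eq]; exact tendsto_snd
  apply squeeze_zero' (g := fun nm : ℕ × ℕ =>
      1 / (4 * ε ^ 2 * nm.1) + 1 / (4 * ε ^ 2 * nm.2))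
  · filter_upwards with nm
    refine Finset.sum_nonneg fun k _ => Finset.sum_nonneg fun l _ => ?_
    have h1 := binW_nonneg hp0 hp1 (n := nm.1) k
    have h2 := binW_nonneg hq0 hq1 (n := nm.2) l
    have h3 : (0:ℝ) ≤ (if (k : ℝ) / nm.1 = (l : ℝ) / nm.2 then (1:ℝ) else 0) := by
      split <;> norm_num
    positivity
  · filter_upwards [hfst.eventually (eventually_ge_atTop 1),
      hsnd.eventually (eventually_ge_atTop 1)] with nm h1 h2
    obtain ⟨n, m⟩ := nm
    simp only at h1 h2 ⊢
    have pointwise : ∀ k ∈ Finset.range (n + 1), ∀ l ∈ Finset.range (m + 1),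
        binW n p k * binW m q l * (if (k : ℝ) / n = (l : ℝ) / m then (1:ℝ) else 0)
          ≤ binW n p k * binW m q l *
            ((if ε ≤ |(k : ℝ) / n - p| then (1:ℝ) else 0)
              + (if ε ≤ |(l : ℝ) / m - q| then (1:ℝ) else 0)) := by
      intro k _ l _
      have hb : 0 ≤ binW n p k * binW m q l :=
        mul_nonneg (binW_nonneg hp0 hp1 k) (binW_nonneg hq0 hq1 l)
      apply mul_le_mul_of_nonneg_left _ hb
      split_ifs with he hc hd hd
      · norm_num
      · norm_num
      · norm_num
      · exfalso
        push_neg at hc hd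
        have habs : |p - q| ≤ |(k:ℝ)/n - p| + |(l:ℝ)/m - q| := by
          calc |p - q| = |(p - (k:ℝ)/n) + ((l:ℝ)/m - q)| := by rw [he]; ring_nf
            _ ≤ |p - (k:ℝ)/n| + |(l:ℝ)/m - q| := abs_add_le _ _
            _ = |(k:ℝ)/n - p| + |(l:ℝ)/m - q| := by rw [abs_sub_comm]
        rw [hεdef] at hc hd
        linarith
      all_goals norm_num
    calc ∑ k ∈ Finset.range (n + 1), ∑ l ∈ Finset.range (m + 1),
          binW n p k * binW m q l * (if (k : ℝ) / n = (l : ℝ) / m then (1:ℝ) else 0)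
        ≤ ∑ k ∈ Finset.range (n + 1), ∑ l ∈ Finset.range (m + 1),
            binW n p k * binW m q l *
              ((if ε ≤ |(k : ℝ) / n - p| then (1:ℝ) else 0)
                + (if ε ≤ |(l : ℝ) / m - q| then (1:ℝ) else 0)) :=
          Finset.sum_le_sum fun k hk => Finset.sum_le_sum (pointwise k hk)
      _ = (∑ k ∈ Finset.range (n + 1),
              binW n p k * (if ε ≤ |(k : ℝ) / n - p| then (1:ℝ) else 0))
              * (∑ l ∈ Finset.range (m + 1), binW m q l)
          + (∑ k ∈ Finset.range (n + 1), binW n p k)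
              * (∑ l ∈ Finset.range (m + 1),
                  binW m q l * (if ε ≤ |(l : ℝ) / m - q| then (1:ℝ) else 0)) := by
          rw [Finset.sum_mul_sum, Finset.sum_mul_sum, ← Finset.sum_add_distrib]
          refine Finset.sum_congr rfl fun k _ => ?_
          rw [← Finset.sum_add_distrib]
          exact Finset.sum_congr rfl fun l _ => by ring
      _ = (∑ k ∈ Finset.range (n + 1),
              binW n p k * (if ε ≤ |(k : ℝ) / n - p| then (1:ℝ) else 0))
          + (∑ l ∈ Finset.range (m + 1),
              binW m q l * (if ε ≤ |(l : ℝ) / m - q| then (1:ℝ) else 0)) := by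
          rw [sum_binW, sum_binW]; ring
      _ ≤ 1 / (4 * ε ^ 2 * n) + 1 / (4 * ε ^ 2 * m) :=
          add_le_add (cheb n h1 p ε hp0 hp1 hε) (cheb m h2 q ε hq0 hq1 hε)
  · have h1 : Tendsto (fun n : ℕ => 1 / (4 * ε ^ 2 * (n:ℝ))) atTop (nhds 0) := by
      have := tendsto_const_div_atTop_nhds_zero_nat (1 / (4 * ε ^ 2))
      refine this.congr fun n => ?_
      rw [div_div]
    have := (h1.comp hfst).add (h1.comp hsnd)
    simpa using this
end
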